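/- Recurrence for the kernel elements φ_q (proof of Lemma 8): for every integer n let σ_n := S_n(m + m^(−1)) ∈ A, where S_n are the dilated Chebyshev polynomials of the second kind extended to all integer indices by the recurrence (so S_0 = 1, S_1 = X, S_{n+1} = X·S_n − S_{n−1}, S_{−1} = 0, S_{−n} = −S_{n−2}). Let ρ := t^4·C(1,−4) − t^(−2)·C(1,−2) + t^2·C(0,4) − t^6·C(0,2) + (t^(−2) − t^6)·1, and for q ∈ ℤ set φ_q := (t^4 − t^(−4))·( C(1,q) − t^(q+6)·σ_{q+6} + t^(q+2)·σ_q ) − ( t^(q+4)·σ_{q+4} − t^q·σ_q )·ρ. Then for every integer q, C(0,1)·φ_q = t^(−1)·φ_{q+1} + t·φ_{q−1}. -/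

import Mathlib

open Polynomial

/-- The dilated Chebyshev polynomials of the second kind on natural indices:
`S 0 = 1`, `S 1 = X`, `S (n+2) = X * S (n+1) - S n`. -/
noncomputable def dilChebS : ℕ → Polynomial ℂ
  | 0 => 1
  | 1 => X
  | n + 2 => X * dilChebS (n + 1) - dilChebS n

/-- The extension of the dilated Chebyshev polynomials of the second kind to all
integer indices by the recurrence: `S (-1) = 0` and `S (-n) = -S (n-2)` for `n ≥ 2`. -/
noncomputable def dilChebSZ : ℤ → Polynomial ℂ := fun n =>
  if 0 ≤ n then dilChebS n.toNat
  else if n = -1 then 0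
  else -dilChebS (-n - 2).toNat

lemma dilChebS_rec (k : ℕ) : X * dilChebS (k+1) = dilChebS (k+2) + dilChebS k := by
  rw [show dilChebS (k+2) = X * dilChebS (k+1) - dilChebS k from rfl]; ring

lemma dilChebSZ_rec (n : ℤ) : X * dilChebSZ n = dilChebSZ (n+1) + dilChebSZ (n-1) := by
  obtain ⟨k⟩ | ⟨k⟩ := n
  · match k with
    | 0 => simp [dilChebSZ, dilChebS]
    | (j+1) =>
      have h0 : ((Int.ofNat (j+1)) : ℤ) = (j+1 : ℕ) := rfl
      rw [h0]
      have ha : ((j+1:ℕ) : ℤ) + 1 = ((j+2:ℕ) : ℤ) := by push_cast; ring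
      have hb : ((j+1:ℕ) : ℤ) - 1 = ((j:ℕ) : ℤ) := by push_cast; ring
      rw [ha, hb]
      simp only [dilChebSZ, Int.toNat_natCast, if_pos (Int.natCast_nonneg _)]
      exact dilChebS_rec j
  · match k with
    | 0 => simp [dilChebSZ, dilChebS, show Int.negSucc 0 = -1 from rfl]
    | 1 =>
      have : Int.negSucc 1 = -2 := rfl
      rw [this]
      norm_num [dilChebSZ, dilChebS]
    | (j+2) =>
      have h0 : Int.negSucc (j+2) = -(j+3 : ℕ) := rfl
      rw [h0]
      have ha : (-(j+3:ℕ) : ℤ) + 1 = -((j+2:ℕ) : ℤ) := by push_cast; ring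
      have hb : (-(j+3:ℕ) : ℤ) - 1 = -((j+4:ℕ) : ℤ) := by push_cast; ring
      rw [ha, hb]
      have hneg : ∀ i : ℕ, dilChebSZ (-(i+2:ℕ)) = -dilChebS i := by
        intro i
        simp only [dilChebSZ]
        rw [if_neg (by omega), if_neg (by omega)]
        rw [show (- -(↑(i+2):ℤ) - 2).toNat = i by omega]
      rw [hneg (j+1), hneg j, hneg (j+2), mul_neg, dilChebS_rec j]
      ring


/-- recurrence for the kernel elements `φ_q` from the proof of
Lemma 8: `C(0,1)·φ_q = t^(−1)·φ_{q+1} + t·φ_{q−1}`. -/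
theorem phi_recurrence (t : ℂ) (ht : t ≠ 0) (A : Type*) [Ring A] [Algebra ℂ A]
    (l m : Aˣ) (rel : (l : A) * (m : A) = t ^ 2 • ((m : A) * (l : A)))
    (e : ℤ → ℤ → A)
    (he : ∀ p q : ℤ, e p q = t ^ (-(p * q)) • ((l ^ p * m ^ q : Aˣ) : A))
    (Cos : ℤ → ℤ → A)
    (hC : ∀ p q : ℤ, Cos p q = e p q + e (-p) (-q))
    (σ : ℤ → A)
    (hσ : ∀ n : ℤ, σ n = Polynomial.aeval ((m : A) + ((m⁻¹ : Aˣ) : A)) (dilChebSZ n))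
    (ρ : A)
    (hρ : ρ = t ^ (4 : ℤ) • Cos 1 (-4) - t ^ (-2 : ℤ) • Cos 1 (-2)
        + t ^ (2 : ℤ) • Cos 0 4 - t ^ (6 : ℤ) • Cos 0 2
        + (t ^ (-2 : ℤ) - t ^ (6 : ℤ)) • (1 : A))
    (φ : ℤ → A)
    (hφ : ∀ q : ℤ, φ q = (t ^ (4 : ℤ) - t ^ (-4 : ℤ)) •
          (Cos 1 q - t ^ (q + 6) • σ (q + 6) + t ^ (q + 2) • σ q)
        - (t ^ (q + 4) • σ (q + 4) - t ^ q • σ q) * ρ) :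
    ∀ q : ℤ, Cos 0 1 * φ q = t ^ (-1 : ℤ) • φ (q + 1) + t • φ (q - 1) := by
  have ht2 : (t^2 : ℂ) ≠ 0 := pow_ne_zero _ ht
  -- commutation relations
  have h1 : (m : A) * l = (t^2)⁻¹ • ((l : A) * m) := by
    rw [rel, smul_smul, inv_mul_cancel₀ ht2, one_smul]
  have h2 : (m : A) * ↑l⁻¹ = t^2 • ((↑l⁻¹ : A) * m) := by
    have key : (↑l⁻¹ : A) * ((↑l * ↑m) * ↑l⁻¹) = ↑m * ↑l⁻¹ := by
      rw [← mul_assoc, ← mul_assoc, Units.inv_mul, one_mul]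
    rw [← key, rel]
    simp only [smul_mul_assoc, mul_smul_comm, mul_assoc, Units.mul_inv, Units.inv_mul,
      mul_one, one_mul]
  have h3 : (↑m⁻¹ : A) * l = t^2 • ((l : A) * ↑m⁻¹) := by
    have key : (↑m⁻¹ : A) * ((↑l * ↑m) * ↑m⁻¹) = ↑m⁻¹ * ↑l := by
      rw [mul_assoc, Units.mul_inv, mul_one]
    rw [← key, rel]
    simp only [smul_mul_assoc, mul_smul_comm, mul_assoc, Units.mul_inv, Units.inv_mul,
      mul_one, one_mul]
    rw [← mul_assoc, Units.inv_mul, one_mul]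
  have hx : (↑l⁻¹ : A) * ↑m⁻¹ = t^2 • ((↑m⁻¹:A) * ↑l⁻¹) := by
    have key : (↑l⁻¹ : A) * ((↑m⁻¹ * ↑l) * ↑l⁻¹) = ↑l⁻¹ * ↑m⁻¹ := by
      rw [mul_assoc, Units.mul_inv, mul_one]
    rw [← key, h3]
    simp only [smul_mul_assoc, mul_smul_comm, mul_assoc]
    rw [← mul_assoc, Units.inv_mul, one_mul]
  have h4 : (↑m⁻¹ : A) * ↑l⁻¹ = (t^2)⁻¹ • ((↑l⁻¹ : A) * ↑m⁻¹) := by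
    rw [hx, smul_smul, inv_mul_cancel₀ ht2, one_smul]
  have hts : ∀ a b : ℤ, t ^ a * t ^ b = t ^ (a+b) := fun a b => (zpow_add₀ ht a b).symm
  have htp : (t^2 : ℂ) = t ^ (2:ℤ) := by exact_mod_cast (zpow_natCast t 2).symm
  have htn : ((t^2 : ℂ))⁻¹ = t ^ (-2:ℤ) := by rw [zpow_neg, ← htp]
  have hmm : ∀ r : ℤ, (m:A) * ↑(m ^ r) = ↑(m ^ (r+1)) := fun r => by
    rw [← Units.val_mul, ((Commute.refl m).zpow_right r).eq, ← zpow_add_one]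
  have hmm' : ∀ r : ℤ, (↑m⁻¹:A) * ↑(m ^ r) = ↑(m ^ (r-1)) := fun r => by
    rw [← Units.val_mul, (((Commute.refl m).zpow_right r).inv_left).eq, ← zpow_sub_one]
  have me1 : ∀ r : ℤ, (m:A) * e 1 r = t^(-1:ℤ) • e 1 (r+1) := by
    intro r
    rw [he 1 r, he 1 (r+1)]
    simp only [zpow_one, Units.val_mul, smul_smul, mul_smul_comm]
    rw [← mul_assoc, h1, smul_mul_assoc, smul_smul, mul_assoc, hmm r]
    congr 1
    rw [htn, hts, hts]
    congr 1; ring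
  have me2 : ∀ r : ℤ, (↑m⁻¹:A) * e 1 r = t • e 1 (r-1) := by
    intro r
    rw [he 1 r, he 1 (r-1)]
    simp only [zpow_one, Units.val_mul, smul_smul, mul_smul_comm]
    rw [← mul_assoc, h3, smul_mul_assoc, smul_smul, mul_assoc, hmm' r]
    congr 1
    rw [htp, hts, show -(1*r) + 2 = 1 + -(1*(r-1)) by ring, ← hts, zpow_one]
  have me3 : ∀ r : ℤ, (m:A) * e (-1) (-r) = t • e (-1) (-(r-1)) := by
    intro r
    rw [he (-1) (-r), he (-1) (-(r-1))]
    simp only [zpow_neg_one, Units.val_mul, smul_smul, mul_smul_comm]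
    rw [← mul_assoc, h2, smul_mul_assoc, smul_smul, mul_assoc, hmm (-r)]
    rw [show -r + 1 = -(r-1) by ring]
    congr 1
    rw [htp, hts, show -(-1*-r) + 2 = 1 + -(-1*-(r-1)) by ring, ← hts, zpow_one]
  have me4 : ∀ r : ℤ, (↑m⁻¹:A) * e (-1) (-r) = t^(-1:ℤ) • e (-1) (-(r+1)) := by
    intro r
    rw [he (-1) (-r), he (-1) (-(r+1))]
    simp only [zpow_neg_one, Units.val_mul, smul_smul, mul_smul_comm]
    rw [← mul_assoc, h4, smul_mul_assoc, smul_smul, mul_assoc, hmm' (-r)]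
    rw [show -r - 1 = -(r+1) by ring]
    congr 1
    rw [htn, hts, show (t:ℂ)⁻¹ = t ^ (-1:ℤ) from (zpow_neg_one t).symm, hts]
    congr 1; ring
  have hx01 : Cos 0 1 = (m : A) + ↑m⁻¹ := by
    rw [hC, he, he]
    simp [zpow_one, zpow_neg_one]
  have hCC : ∀ r : ℤ, Cos 0 1 * Cos 1 r = t^(-1:ℤ) • Cos 1 (r+1) + t • Cos 1 (r-1) := by
    intro r
    rw [hx01, hC 1 r, hC 1 (r+1), hC 1 (r-1)]
    rw [add_mul, mul_add, mul_add, me1 r, me2 r, me3 r, me4 r]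
    simp only [smul_add]
    abel
  have hσrec : ∀ n : ℤ, Cos 0 1 * σ n = σ (n+1) + σ (n-1) := by
    intro n
    rw [hx01, hσ, hσ, hσ, ← map_add, ← dilChebSZ_rec n, map_mul, aeval_X]
  intro q
  rw [hφ q, hφ (q+1), hφ (q-1)]
  simp only [mul_sub, mul_add, mul_smul_comm, ← mul_assoc, hCC, hσrec]
  simp only [add_mul, sub_mul, smul_add, smul_sub, smul_mul_assoc, smul_smul]
  ring_nf
  match_scalars
  all_goals simp [← zpow_add₀ ht, ← zpow_one_add₀ ht, mul_comm, mul_assoc, mul_left_comm,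
    ← zpow_neg, add_comm, add_assoc, add_left_comm]
  all_goals (simp only [← mul_assoc, ← zpow_one_add₀ ht, hts]; congr 1; ring)
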